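/- Let g : P × Λ → E be square-integrable with respect to μ ⊗ ν, with overall mean ḡ and conditional mean ḡ₂(λ) = ∫ g(p,λ) dμ(p). Let p and p' be two independent samples from μ and let λ₁,…,λ_K be i.i.d. samples from ν, independent of p and p'. Define the centered K-averages P = (1/K) Σ_{k=1}^K g(p, λ_k) − ḡ and P' = (1/K) Σ_{k=1}^K g(p', λ_k) − ḡ (note the same λ_k's appear in both). Then the cross-correlation satisfies E[ ⟨P, P'⟩ ] = (1/K) ∫_Λ ‖ḡ₂(λ) − ḡ‖² dν(λ). -/

import Mathlib

/-!
Write `A(p, λ) = K⁻¹ ∑ₖ g(p, λₖ) - ḡ`. Since `p` and `p'` are independent and share `λ`,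
integrating them out first gives `⟪∫ A(·, λ) dμ, ∫ A(·, λ) dμ⟫ = ‖K⁻¹ ∑ₖ (ḡ₂(λₖ) - ḡ)‖²`.
The summands `ḡ₂(λₖ) - ḡ` are i.i.d. and centred, so in the expectation over `λ` the cross
terms vanish and only the `K` diagonal terms `∫ ‖ḡ₂ - ḡ‖² dν` survive, leaving `K⁻¹ V_λ`.
-/

open MeasureTheory ProbabilityTheory
open scoped RealInnerProductSpace

theorem inv_smul_sum_sub {V : Type*} [AddCommGroup V] [Module ℝ V] {n : ℕ} (hn : n ≠ 0)
    (x : Fin n → V) (c : V) : (n : ℝ)⁻¹ • ∑ i, (x i - c) = (n : ℝ)⁻¹ • ∑ i, x i - c := by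
  rw [Finset.sum_sub_distrib, Finset.sum_const, Finset.card_univ, Fintype.card_fin, smul_sub,
    ← Nat.cast_smul_eq_nsmul ℝ, smul_smul, inv_mul_cancel₀ (Nat.cast_ne_zero.2 hn), one_smul]

namespace MeasureTheory

variable {E : Type*} [NormedAddCommGroup E] [InnerProductSpace ℝ E]

theorem MemLp.integrable_inner {α : Type*} [MeasurableSpace α] {μ : Measure α} {F G : α → E}
    (hF : MemLp F 2 μ) (hG : MemLp G 2 μ) : Integrable (fun x => ⟪F x, G x⟫) μ := by
  refine (L2.integrable_inner (𝕜 := ℝ) (hF.toLp F) (hG.toLp G)).congr ?_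
  filter_upwards [hF.coeFn_toLp, hG.coeFn_toLp] with x hFx hGx
  rw [hFx, hGx]

theorem integral_prod_inner [CompleteSpace E] {α β : Type*} [MeasurableSpace α]
    [MeasurableSpace β] {μ : Measure α} {ν : Measure β} [SFinite μ] [SFinite ν]
    {F : α → E} {G : β → E} (hF : Integrable F μ) (hG : Integrable G ν) :
    ∫ z, ⟪F z.1, G z.2⟫ ∂(μ.prod ν) = ⟪∫ x, F x ∂μ, ∫ y, G y ∂ν⟫ :=
  integral_prod_bilin (innerSL ℝ) hF hG

section TwoSamples

variable {P L : Type*} [MeasurableSpace P] [MeasurableSpace L] {μ : Measure P}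
  [IsProbabilityMeasure μ] {ρ : Measure L} [IsFiniteMeasure ρ] {A : P × L → E}

theorem MemLp.integrable_inner_two_samples (hA : MemLp A 2 (μ.prod ρ)) :
    Integrable (fun x : (P × P) × L => ⟪A (x.1.1, x.2), A (x.1.2, x.2)⟫)
      ((μ.prod μ).prod ρ) :=
  (hA.comp_measurePreserving (measurePreserving_fst.prod (.id ρ))).integrable_inner
    (hA.comp_measurePreserving (measurePreserving_snd.prod (.id ρ)))

variable [CompleteSpace E]

theorem MemLp.ae_integral_inner_two_samples (hA : MemLp A 2 (μ.prod ρ)) :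
    ∀ᵐ l ∂ρ, ∫ q : P × P, ⟪A (q.1, l), A (q.2, l)⟫ ∂(μ.prod μ) = ‖∫ p, A (p, l) ∂μ‖ ^ 2 := by
  filter_upwards [(hA.integrable one_le_two).prod_left_ae] with l hl
  rw [integral_prod_inner hl hl, real_inner_self_eq_norm_sq]

theorem MemLp.integral_inner_two_samples (hA : MemLp A 2 (μ.prod ρ)) :
    ∫ x : (P × P) × L, ⟪A (x.1.1, x.2), A (x.1.2, x.2)⟫ ∂((μ.prod μ).prod ρ)
      = ∫ l, ‖∫ p, A (p, l) ∂μ‖ ^ 2 ∂ρ := by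
  rw [integral_prod_symm _ hA.integrable_inner_two_samples]
  exact integral_congr_ae hA.ae_integral_inner_two_samples

/-- `‖∫ A(·, l) dμ‖²` is the two-sample integral of `⟪A(p, l), A(p', l)⟫`, which is integrable
in `l`; this replaces Jensen's inequality. -/
theorem MemLp.integral_prod_right_two (hA : MemLp A 2 (μ.prod ρ)) :
    MemLp (fun l => ∫ p, A (p, l) ∂μ) 2 ρ :=
  (memLp_two_iff_integrable_sq_norm hA.1.prod_swap.integral_prod_right').2 <|
    hA.integrable_inner_two_samples.integral_prod_right.congr hA.ae_integral_inner_two_samples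

end TwoSamples

section IID

variable [CompleteSpace E] {ι Λ : Type*} [Fintype ι] [MeasurableSpace Λ] {ν : Measure Λ}
  [IsProbabilityMeasure ν] {f : Λ → E}

theorem integral_inner_comp_eval_of_ne (hf : Integrable f ν) {i j : ι} (hij : i ≠ j) :
    ∫ l, ⟪f (l i), f (l j)⟫ ∂(Measure.pi fun _ => ν) = ⟪∫ x, f x ∂ν, ∫ x, f x ∂ν⟫ := by
  have hindep := (iIndepFun_pi (μ := fun _ : ι => ν) (X := fun _ => id)
    fun _ => aemeasurable_id).indepFun hij
  have hmap (k : ι) : (Measure.pi fun _ : ι => ν).map (fun l => l k) = ν :=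
    (measurePreserving_eval _ k).map_eq
  nth_rw 2 [← integral_comp_eval (μ := fun _ : ι => ν) (i := j) hf.1]
  rw [← integral_comp_eval (μ := fun _ : ι => ν) (i := i) hf.1]
  exact hindep.integral_bilin_comp_comp (B := innerSL ℝ) (measurable_pi_apply i).aemeasurable
    (measurable_pi_apply j).aemeasurable (by simpa only [id, hmap]) (by simpa only [id, hmap])

theorem integral_norm_sum_comp_eval_sq (hf : MemLp f 2 ν) (hf0 : ∫ x, f x ∂ν = 0) :
    ∫ l, ‖∑ i, f (l i)‖ ^ 2 ∂(Measure.pi fun _ : ι => ν)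
      = Fintype.card ι * ∫ x, ‖f x‖ ^ 2 ∂ν := by
  classical
  have hfi (i : ι) : MemLp (fun l : ι → Λ => f (l i)) 2 (Measure.pi fun _ => ν) :=
    hf.comp_measurePreserving (measurePreserving_eval _ i)
  have hterm (i j : ι) : ∫ l, ⟪f (l i), f (l j)⟫ ∂(Measure.pi fun _ => ν)
      = if i = j then ∫ x, ‖f x‖ ^ 2 ∂ν else 0 := by
    split_ifs with hij
    · subst hij
      simp_rw [real_inner_self_eq_norm_sq]
      exact integral_comp_eval (μ := fun _ : ι => ν) (hf.1.norm.pow 2)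
    · rw [integral_inner_comp_eval_of_ne (hf.integrable one_le_two) hij, hf0, inner_zero_left]
  simp_rw [← real_inner_self_eq_norm_sq (∑ i, _), sum_inner, inner_sum]
  rw [integral_finsetSum _ fun i _ => integrable_finsetSum _ fun j _ =>
    (hfi i).integrable_inner (hfi j)]
  simp_rw [integral_finsetSum _ fun j _ => (hfi _).integrable_inner (hfi j), hterm,
    Finset.sum_ite_eq, Finset.mem_univ, if_true, Finset.sum_const, Finset.card_univ,
    nsmul_eq_mul]

end IID

end MeasureTheory

/-- **Off-diagonal cross term in the multi-mix variance.** For two independent sample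
pairs `p, p' ∼ μ` and `K` i.i.d. mixing weights `λ₁,…,λ_K ∼ ν` independent of `p, p'`
and shared between the two centered `K`-averages, the expected inner product of the
centered averages equals `(1/K) V_λ` with `V_λ = ∫ ‖ḡ₂(λ) − ḡ‖² dν`. -/
theorem multi_mix_cross_term
    {P Λ E : Type*} [MeasurableSpace P] [MeasurableSpace Λ]
    [NormedAddCommGroup E] [InnerProductSpace ℝ E] [FiniteDimensional ℝ E]
    (μ : Measure P) (ν : Measure Λ) [IsProbabilityMeasure μ] [IsProbabilityMeasure ν]
    (g : P × Λ → E) (hg : MemLp g 2 (μ.prod ν))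
    (gbar : E) (hgbar : gbar = ∫ x, g x ∂(μ.prod ν))
    (g2 : Λ → E) (hg2 : ∀ l, g2 l = ∫ p, g (p, l) ∂μ)
    (Vl : ℝ) (hVl : Vl = ∫ l, ‖g2 l - gbar‖ ^ 2 ∂ν)
    (K : ℕ) (hK : 1 ≤ K) :
    ∫ x : (P × P) × (Fin K → Λ),
        ⟪((K : ℝ)⁻¹ • (∑ k : Fin K, g (x.1.1, x.2 k)) - gbar),
          ((K : ℝ)⁻¹ • (∑ k : Fin K, g (x.1.2, x.2 k)) - gbar)⟫
        ∂((μ.prod μ).prod (Measure.pi fun _ : Fin K => ν))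
      = (K : ℝ)⁻¹ * Vl := by
  have hgk (k : Fin K) : MemLp (fun x : P × (Fin K → Λ) => g (x.1, x.2 k)) 2
      (μ.prod (Measure.pi fun _ => ν)) :=
    hg.comp_measurePreserving ((MeasurePreserving.id μ).prod (measurePreserving_eval _ k))
  have hA : MemLp (fun x : P × (Fin K → Λ) => (K : ℝ)⁻¹ • ∑ k, g (x.1, x.2 k) - gbar) 2
      (μ.prod (Measure.pi fun _ => ν)) :=
    ((memLp_finsetSum Finset.univ fun k _ => hgk k).const_smul (K : ℝ)⁻¹).sub (memLp_const gbar)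
  have hg2L2 : MemLp g2 2 ν := funext hg2 ▸ hg.integral_prod_right_two
  have hcentred : ∫ l, (g2 l - gbar) ∂ν = 0 := by
    rw [integral_sub (hg2L2.integrable one_le_two) (integrable_const _), integral_const,
      probReal_univ, one_smul, hgbar, integral_prod_symm _ (hg.integrable one_le_two),
      sub_eq_zero]
    simp_rw [hg2]
  have hmean : ∀ᵐ l ∂(Measure.pi fun _ : Fin K => ν),
      ∫ p, ((K : ℝ)⁻¹ • ∑ k, g (p, l k) - gbar) ∂μ = (K : ℝ)⁻¹ • ∑ k, (g2 (l k) - gbar) := by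
    filter_upwards [ae_all_iff.2 fun k => ((hgk k).integrable one_le_two).prod_left_ae] with l hl
    rw [integral_sub (f := fun p => (K : ℝ)⁻¹ • ∑ k, g (p, l k))
        ((integrable_finsetSum _ fun k _ => hl k).smul _) (integrable_const _),
      integral_smul, integral_finsetSum _ fun k _ => hl k, integral_const, probReal_univ,
      one_smul, inv_smul_sum_sub (by omega)]
    simp_rw [hg2]
  rw [hA.integral_inner_two_samples, integral_congr_ae (hmean.mono fun l hl => by rw [hl])]
  simp_rw [norm_smul, mul_pow]
  rw [integral_const_mul, integral_norm_sum_comp_eval_sq (f := fun l => g2 l - gbar)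
      (hg2L2.sub (memLp_const gbar)) hcentred, ← hVl, Fintype.card_fin, norm_inv,
    RCLike.norm_natCast]
  field_simp
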